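/- Let G be a simple graph on a vertex type V, let n ≥ 4 be a natural number, and let α_0, α_1, …, α_n be a walk in G such that d(α_0, α_{n−2}) = n − 2 and d(α_{n−2}, α_n) = 2. Let X be a metric space and let π : V → Set X be a coarse projection away from the single vertex α_{n−2}, and assume diam(π(α_{n−4}) ∪ π(α_n)) ≥ 4·n. Then d(α_0, α_n) = n; that is, the walk α_0, α_1, …, α_n is a geodesic. -/
import Mathlib

open SimpleGraph

lemma diam_union_triangle' {X : Type*} [MetricSpace X] {A B C : Set X}
    (hB : B.Nonempty) (hAB : Bornology.IsBounded (A ∪ B)) (hBC : Bornology.IsBounded (B ∪ C)) :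
    Metric.diam (A ∪ C) ≤ Metric.diam (A ∪ B) + Metric.diam (B ∪ C) := by
  obtain ⟨b, hb⟩ := hB
  apply Metric.diam_le_of_forall_dist_le (by positivity)
  rintro x hx y hy
  rcases hx with hx | hx <;> rcases hy with hy | hy
  · have := Metric.dist_le_diam_of_mem hAB (Set.mem_union_left _ hx) (Set.mem_union_left _ hy)
    have h2 := Metric.diam_nonneg (s := B ∪ C)
    linarith
  · calc dist x y ≤ dist x b + dist b y := dist_triangle _ _ _
      _ ≤ _ := add_le_add
          (Metric.dist_le_diam_of_mem hAB (Set.mem_union_left _ hx) (Set.mem_union_right _ hb))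
          (Metric.dist_le_diam_of_mem hBC (Set.mem_union_left _ hb) (Set.mem_union_right _ hy))
  · rw [_root_.dist_comm]
    calc dist y x ≤ dist y b + dist b x := dist_triangle _ _ _
      _ ≤ _ := add_le_add
          (Metric.dist_le_diam_of_mem hAB (Set.mem_union_left _ hy) (Set.mem_union_right _ hb))
          (Metric.dist_le_diam_of_mem hBC (Set.mem_union_left _ hb) (Set.mem_union_right _ hx))
  · have := Metric.dist_le_diam_of_mem hBC (Set.mem_union_right _ hx) (Set.mem_union_right _ hy)
    have h2 := Metric.diam_nonneg (s := A ∪ B)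
    linarith

/-- A set-valued map `π : V → Set X` is a *coarse projection away from `W`* if
`π v` is nonempty and bounded for every vertex `v ∉ W`, and
`diam (π u ∪ π v) ≤ 2` for every pair of adjacent vertices `u, v ∉ W`. -/
def CoarseProjection {V X : Type*} [MetricSpace X] (G : SimpleGraph V)
    (π : V → Set X) (W : Set V) : Prop :=
  (∀ v ∉ W, (π v).Nonempty ∧ Bornology.IsBounded (π v)) ∧
  (∀ u v, G.Adj u v → u ∉ W → v ∉ W → Metric.diam (π u ∪ π v) ≤ 2)

lemma chain_diam {V X : Type*} [MetricSpace X] {G : SimpleGraph V} {π : V → Set X} {W : Set V}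
    (hπ : CoarseProjection G π W) :
    ∀ L : ℕ, 1 ≤ L → ∀ w : ℕ → V, (∀ i < L, G.Adj (w i) (w (i+1))) → (∀ i ≤ L, w i ∉ W) →
      Metric.diam (π (w 0) ∪ π (w L)) ≤ 2 * (L : ℝ) := by
  intro L
  induction L with
  | zero => intro h; omega
  | succ L ih =>
    intro _ w hadj hW
    by_cases hL : L = 0
    · subst hL
      have := hπ.2 (w 0) (w 1) (hadj 0 (by norm_num)) (hW 0 (by norm_num)) (hW 1 le_rfl)
      push_cast
      linarith
    · have h1 : 1 ≤ L := by omega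
      have key := ih h1 w (fun i hi => hadj i (by omega)) (fun i hi => hW i (by omega))
      have last : Metric.diam (π (w L) ∪ π (w (L+1))) ≤ 2 :=
        hπ.2 _ _ (hadj L (by omega)) (hW L (by omega)) (hW (L+1) le_rfl)
      have hb : ∀ i ≤ L + 1, Bornology.IsBounded (π (w i)) :=
        fun i hi => (hπ.1 _ (hW i hi)).2
      have hne : (π (w L)).Nonempty := (hπ.1 _ (hW L (by omega))).1
      have tri := diam_union_triangle' (A := π (w 0)) (B := π (w L)) (C := π (w (L+1)))
        hne ((hb 0 (by omega)).union (hb L (by omega)))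
        ((hb L (by omega)).union (hb (L+1) le_rfl))
      push_cast
      push_cast at key
      linarith

/-- Proposition 4.1 (abstract): the walk `α_0, …, α_n` is a geodesic,
i.e. `d(α_0, α_n) = n`. -/
theorem stmt_6 {V X : Type*} [MetricSpace X] (G : SimpleGraph V)
    (n : ℕ) (hn : 4 ≤ n) (α : ℕ → V)
    (hwalk : ∀ i < n, G.Adj (α i) (α (i + 1)))
    (hd1 : G.dist (α 0) (α (n - 2)) = n - 2)
    (hd2 : G.dist (α (n - 2)) (α n) = 2)
    (π : V → Set X) (hπ : CoarseProjection G π {α (n - 2)})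
    (hbig : 4 * (n : ℝ) ≤ Metric.diam (π (α (n - 4)) ∪ π (α n))) :
    G.dist (α 0) (α n) = n := by
  classical
  -- walks along α and the resulting distance bounds
  have haux : ∀ j ≤ n, ∃ q : G.Walk (α 0) (α j), q.length = j := by
    intro j
    induction j with
    | zero => exact fun _ => ⟨Walk.nil, rfl⟩
    | succ j ihj =>
      intro hj
      obtain ⟨q, hq⟩ := ihj (by omega)
      exact ⟨q.concat (hwalk j (by omega)), by simp [Walk.length_concat, hq]⟩
  have hdle : ∀ j ≤ n, G.dist (α 0) (α j) ≤ j := by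
    intro j hj
    obtain ⟨q, hq⟩ := haux j hj
    simpa [hq] using SimpleGraph.dist_le q
  obtain ⟨p1, hp1⟩ := haux (n - 2) (by omega)
  obtain ⟨p2, hp2⟩ := SimpleGraph.exists_walk_of_dist_ne_zero (u := α (n-2)) (v := α n)
    (by rw [hd2]; norm_num)
  rw [hd2] at hp2
  have hub : G.dist (α 0) (α n) ≤ n := by
    have := SimpleGraph.dist_le (p1.append p2)
    rw [Walk.length_append, hp1, hp2] at this
    omega
  by_contra hne
  have hlt : G.dist (α 0) (α n) < n := lt_of_le_of_ne hub hne
  obtain ⟨p, hp⟩ := SimpleGraph.Reachable.exists_walk_length_eq_dist (Nonempty.intro (p1.append p2))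
  have hm : p.length < n := by omega
  by_cases hmem : α (n - 2) ∈ p.support
  · have t1 := SimpleGraph.dist_le (p.takeUntil _ hmem)
    have t2 := SimpleGraph.dist_le (p.dropUntil _ hmem)
    have t3 := congr_arg Walk.length (p.take_spec hmem)
    rw [Walk.length_append] at t3
    rw [hd1] at t1; rw [hd2] at t2
    omega
  · set m := p.length with hmdef
    by_cases hL0 : n = 4 ∧ m = 0
    · obtain ⟨hn4, hm0⟩ := hL0
      have h0n : α 0 = α n := Walk.eq_of_length_eq_zero (p := p) (by omega)
      have h0W : α 0 ∉ ({α (n - 2)} : Set V) := by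
        simp only [Set.mem_singleton_iff]
        intro heq
        rw [← heq, SimpleGraph.dist_self] at hd1
        omega
      have h1W : α 1 ∉ ({α (n - 2)} : Set V) := by
        simp only [Set.mem_singleton_iff]
        intro heq
        have hadj12 := hwalk 1 (by omega)
        have heq' : α 1 = α (1 + 1) := by rw [heq]; congr 1; omega
        exact G.irrefl (heq' ▸ hadj12)
      have hb2 := hπ.2 (α 0) (α 1) (hwalk 0 (by omega)) h0W h1W
      have hbdd : Bornology.IsBounded (π (α 0) ∪ π (α 1)) :=
        ((hπ.1 _ h0W).2).union ((hπ.1 _ h1W).2)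
      have hsub : Metric.diam (π (α 0)) ≤ 2 :=
        le_trans (Metric.diam_mono Set.subset_union_left hbdd) hb2
      have e4 : n - 4 = 0 := by omega
      rw [e4, ← h0n, Set.union_self] at hbig
      have : (16 : ℝ) ≤ 4 * (n : ℝ) := by
        have : (4:ℝ) ≤ (n:ℝ) := by exact_mod_cast hn
        linarith
      linarith
    · have hL1 : 1 ≤ (n - 4) + m := by omega
      set w : ℕ → V := fun i => if i ≤ n - 4 then α (n - 4 - i) else p.getVert (i - (n - 4))
        with hw
      have hwlate : ∀ i, n - 4 ≤ i → w i = p.getVert (i - (n - 4)) := by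
        intro i hi
        rcases eq_or_lt_of_le hi with h | h
        · rw [hw]
          simp only [← h, le_refl, if_pos, Nat.sub_self, Walk.getVert_zero]
        · rw [hw]
          simp only [if_neg (by omega : ¬ i ≤ n - 4)]
      have hadjw : ∀ i < (n - 4) + m, G.Adj (w i) (w (i + 1)) := by
        intro i hi
        by_cases hc : i + 1 ≤ n - 4
        · have e1 : w i = α (n - 4 - i) := by rw [hw]; simp only [if_pos (by omega : i ≤ n - 4)]
          have e2 : w (i + 1) = α (n - 4 - (i + 1)) := by rw [hw]; simp only [if_pos hc]
          rw [e1, e2]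
          have h := hwalk (n - 4 - (i + 1)) (by omega)
          have e3 : n - 4 - (i + 1) + 1 = n - 4 - i := by omega
          rw [e3] at h
          exact h.symm
        · rw [hwlate i (by omega), hwlate (i + 1) (by omega)]
          have e : (i + 1) - (n - 4) = (i - (n - 4)) + 1 := by omega
          rw [e]
          exact p.adj_getVert_succ (by omega)
      have hWw : ∀ i ≤ (n - 4) + m, w i ∉ ({α (n - 2)} : Set V) := by
        intro i hi
        simp only [Set.mem_singleton_iff]
        by_cases hc : i ≤ n - 4
        · have e1 : w i = α (n - 4 - i) := by rw [hw]; simp only [if_pos hc]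
          rw [e1]
          intro heq
          have h := hdle (n - 4 - i) (by omega)
          rw [heq, hd1] at h
          omega
        · rw [hwlate i (by omega)]
          intro heq
          exact hmem (Walk.mem_support_iff_exists_getVert.mpr ⟨i - (n - 4), heq, by omega⟩)
      have hchain := chain_diam hπ ((n - 4) + m) hL1 w hadjw hWw
      have hw0 : w 0 = α (n - 4) := by rw [hw]; simp
      have hwL : w ((n - 4) + m) = α n := by
        rw [hwlate _ (by omega)]
        have e : (n - 4) + m - (n - 4) = m := by omega
        rw [e, hmdef]
        exact p.getVert_length
      rw [hw0, hwL] at hchain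
      have hcast : 4 * n ≤ 2 * ((n - 4) + m) := by
        exact_mod_cast le_trans hbig hchain
      omega
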